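/- arXiv:1408.0776 — 3 statements merged into one kernel-verified Lean document; each statement's English description precedes it below -/
import Mathlib

section
/- Suppose f : [0, ∞) → ℝ is nonnegative, continuously differentiable, satisfies f'(x) = -(32/(9π))^(1/4) * f(x)^(3/4) for all x ≥ 0, and f(z) > 0 at some point z > 0. Then there exist real constants a, b with 4a = -(32/(9π))^(1/4) and b > 0 such that f(x) = (a x + b)^4 on the connected component of {x ≥ 0 : f(x) > 0} containing z. In particular f has compact support on [0, ∞). -/
/-!
On the set `S = {x ≥ 0 | f x > 0}` the equation `f' = -c f^(3/4)` separates: `(f^(1/4))' = -c/4`,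
so `f^(1/4)` is affine on `S`. Since `f' ≤ 0`, `f` is antitone on `[0, ∞)`, hence `S` is an interval
and the affine formula holds on all of it. A point of `S` has `f^(1/4) > 0`, so `S` lies to the left
of the zero `-b/a` of the affine function, and `f` vanishes beyond it.
-/

open Real Set

theorem Convex.eq_add_mul_sub_of_hasDerivWithinAt {s : Set ℝ} {g : ℝ → ℝ} {m x z : ℝ}
    (hs : Convex ℝ s) (hg : ∀ y ∈ s, HasDerivWithinAt g m s y) (hx : x ∈ s) (hz : z ∈ s) :
    g x = g z + m * (x - z) := by
  have h := hs.norm_image_sub_le_of_norm_hasDerivWithin_le (f := fun y => g y - m * y)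
    (f' := fun _ => 0) (C := 0)
    (fun y hy => by
      simpa [Pi.sub_def] using (hg y hy).sub ((hasDerivWithinAt_id y s).const_mul m))
    (by simp) hz hx
  simp only [zero_mul, norm_le_zero_iff, sub_eq_zero] at h
  linarith

theorem AntitoneOn.ordConnected_setOf_Ici_pos {f : ℝ → ℝ} {a : ℝ} (hf : AntitoneOn f (Ici a)) :
    OrdConnected {x | a ≤ x ∧ 0 < f x} :=
  ⟨fun _ hx _ hy _ ht =>
    ⟨hx.1.trans ht.1, hy.2.trans_le (hf (hx.1.trans ht.1) (hx.1.trans (ht.1.trans ht.2)) ht.2)⟩⟩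

section SeparableODE

variable {f : ℝ → ℝ} {k p : ℝ}

theorem antitoneOn_Ici_of_deriv_eq_mul_rpow (hk : k ≤ 0) (hnn : ∀ x, 0 ≤ x → 0 ≤ f x)
    (hf : ContDiffOn ℝ 1 f (Ici 0)) (hode : ∀ x, 0 ≤ x → deriv f x = k * f x ^ p) :
    AntitoneOn f (Ici 0) := by
  apply antitoneOn_of_deriv_nonpos (convex_Ici 0) hf.continuousOn
  · rw [interior_Ici]
    exact (hf.differentiableOn one_ne_zero).mono Ioi_subset_Ici_self
  · intro x hx
    rw [interior_Ici] at hx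
    rw [hode x hx.le]
    exact mul_nonpos_of_nonpos_of_nonneg hk (rpow_nonneg (hnn x hx.le) p)

/-- `k ≠ 0` makes `deriv f x ≠ 0`, which forces `f` to be differentiable at `x` (otherwise
`deriv f x` would be the junk value `0`). -/
theorem hasDerivAt_rpow_one_sub_of_deriv_eq_mul_rpow {x : ℝ} (hk : k ≠ 0) (hx : 0 < f x)
    (hode : deriv f x = k * f x ^ p) :
    HasDerivAt (fun y => f y ^ (1 - p)) ((1 - p) * k) x := by
  have hd : DifferentiableAt ℝ f x :=
    differentiableAt_of_deriv_ne_zero (hode ▸ mul_ne_zero hk (rpow_pos_of_pos hx p).ne')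
  convert hd.hasDerivAt.rpow_const (p := 1 - p) (Or.inl hx.ne') using 1
  have hcancel : f x ^ p * f x ^ (-p) = 1 := by rw [← rpow_add hx, add_neg_cancel, rpow_zero]
  rw [hode, sub_sub_cancel_left]
  linear_combination (-(1 - p) * k) * hcancel

theorem Convex.rpow_one_sub_eq_of_deriv_eq_mul_rpow {s : Set ℝ} {x z : ℝ} (hs : Convex ℝ s)
    (hk : k ≠ 0) (hpos : ∀ y ∈ s, 0 < f y) (hode : ∀ y ∈ s, deriv f y = k * f y ^ p)
    (hx : x ∈ s) (hz : z ∈ s) :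
    f x ^ (1 - p) = f z ^ (1 - p) + (1 - p) * k * (x - z) :=
  hs.eq_add_mul_sub_of_hasDerivWithinAt (fun y hy =>
    (hasDerivAt_rpow_one_sub_of_deriv_eq_mul_rpow hk (hpos y hy) (hode y hy)).hasDerivWithinAt)
    hx hz

end SeparableODE

theorem stmt3 (f : ℝ → ℝ)
    (hnn : ∀ x : ℝ, 0 ≤ x → 0 ≤ f x)
    (hc1 : ContDiffOn ℝ 1 f (Set.Ici 0))
    (hode : ∀ x : ℝ, 0 ≤ x →
      deriv f x = -(32 / (9 * π)) ^ ((1 : ℝ) / 4) * (f x) ^ ((3 : ℝ) / 4))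
    (z : ℝ) (hz : 0 < z) (hfz : 0 < f z) :
    (∃ a b : ℝ, 4 * a = -(32 / (9 * π)) ^ ((1 : ℝ) / 4) ∧ 0 < b ∧
      ∀ x ∈ connectedComponentIn {x : ℝ | 0 ≤ x ∧ 0 < f x} z, f x = (a * x + b) ^ 4) ∧
    ∃ R : ℝ, ∀ x : ℝ, R ≤ x → f x = 0 := by
  set c : ℝ := (32 / (9 * π)) ^ ((1 : ℝ) / 4)
  have hc : 0 < c := by positivity
  set S : Set ℝ := {x : ℝ | 0 ≤ x ∧ 0 < f x}
  have hS : Convex ℝ S := (antitoneOn_Ici_of_deriv_eq_mul_rpow (neg_nonpos.2 hc.le) hnn hc1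
    hode).ordConnected_setOf_Ici_pos.convex
  set a := -c / 4 with ha_def
  set b := f z ^ ((1 : ℝ) / 4) - a * z with hb_def
  have hroot : ∀ x ∈ S, f x ^ ((1 : ℝ) / 4) = a * x + b := fun x hx => by
    have h := hS.rpow_one_sub_eq_of_deriv_eq_mul_rpow (neg_ne_zero.2 hc.ne') (fun y hy => hy.2)
      (fun y hy => hode y hy.1) hx ⟨hz.le, hfz⟩
    rw [show (1 : ℝ) - 3 / 4 = 1 / 4 by norm_num] at h
    rw [h, hb_def, ha_def]
    ring
  have ha : a < 0 := by linarith
  have hb : 0 < b := by nlinarith [rpow_pos_of_pos hfz ((1 : ℝ) / 4)]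
  refine ⟨⟨a, b, by ring, hb, fun x hx => ?_⟩, -b / a, fun x hx => ?_⟩
  · have hxS := connectedComponentIn_subset S z hx
    rw [← hroot x hxS, one_div, show (4 : ℝ) = (4 : ℕ) by norm_num,
      rpow_inv_natCast_pow hxS.2.le four_ne_zero]
  · by_contra hne
    have hx0 : 0 ≤ x := (div_pos_of_neg_of_neg (neg_neg_of_pos hb) ha).le.trans hx
    have hxS : x ∈ S := ⟨hx0, (hnn x hx0).lt_of_ne' hne⟩
    have hpos := hroot x hxS ▸ rpow_pos_of_pos hxS.2 ((1 : ℝ) / 4)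
    have hax : x * a ≤ -b := (div_le_iff_of_neg ha).1 hx
    linarith
end

section
/- Let w : ℝ → ℝ≥0 be twice continuously differentiable on (0, ∞), non-increasing on (0, ∞), satisfying w''(x) = sqrt((2/π) w(x)) for x > 0, with lim_{x→∞} w(x) = 0, lim_{x→∞} w'(x) = 0, and right derivative at 0 equal to -1. Then w(x) = (1/(72π)) ((18π)^(1/3) - x)^4 for 0 < x < (18π)^(1/3) and w(x) = 0 for x ≥ (18π)^(1/3). -/
/-!
Along a solution the energy `w' ^ 2 / 2 - (2 / 3) √(2 / π) w ^ (3 / 2)` is constant, and the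
conditions at infinity make it zero. Since `w` is non-increasing, `w' = -4 k w ^ (3 / 4)` with
`k ^ 4 = 1 / (72 π)`, so `w ^ (1 / 4)` decreases with slope `-k` as long as `w > 0`. Once `w`
vanishes it stays zero, hence `w = (k (b - x)) ^ 4` before its first zero `b` and `w = 0` after
it; matching the right derivative `-1` at the origin gives `4 k ^ 4 b ^ 3 = 1`, i.e.
`b ^ 3 = 18 π`.
-/

open Real Filter Set Topology

theorem sub_eq_mul_sub_of_hasDerivAt_const {g : ℝ → ℝ} {c a b : ℝ} (hab : a < b)
    (hcont : ContinuousOn g (Icc a b)) (hderiv : ∀ t ∈ Ioo a b, HasDerivAt g c t) :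
    g b - g a = c * (b - a) := by
  obtain ⟨t, -, ht⟩ := exists_hasDerivAt_eq_slope g (fun _ => c) hab hcont hderiv
  rw [ht, div_mul_cancel₀ _ (sub_pos.2 hab).ne']

theorem sq_eq_mul_rpow_of_hasDerivAt_eq_mul_sqrt {f f' : ℝ → ℝ} {c : ℝ}
    (hf : ∀ x, 0 < x → HasDerivAt f (f' x) x)
    (hf' : ∀ x, 0 < x → HasDerivAt f' (c * √(f x)) x)
    (hlim : Tendsto f atTop (𝓝 0)) (hlim' : Tendsto f' atTop (𝓝 0)) {x : ℝ} (hx : 0 < x) :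
    f' x ^ 2 = 4 / 3 * c * f x ^ (3 / 2 : ℝ) := by
  set E : ℝ → ℝ := fun t => f' t ^ 2 / 2 - 2 / 3 * c * f t ^ (3 / 2 : ℝ) with hE_def
  have hE : ∀ t, 0 < t → HasDerivAt E 0 t := by
    intro t ht
    have hpow := (hf t ht).rpow_const (p := 3 / 2) (Or.inr (by norm_num))
    refine ((((hf' t ht).pow 2).div_const 2).sub (hpow.const_mul (2 / 3 * c))).congr_deriv ?_
    rw [sqrt_eq_rpow]
    norm_num
    ring
  have hconst : ∀ y, x < y → E y = E x := fun y hxy => by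
    have := sub_eq_mul_sub_of_hasDerivAt_const hxy
      (fun t ht => (hE t (hx.trans_le ht.1)).continuousAt.continuousWithinAt)
      (fun t ht => hE t (hx.trans ht.1))
    linarith
  have hElim : Tendsto E atTop (𝓝 0) := by
    have hrpow := (continuousAt_rpow_const 0 (3 / 2) (Or.inr (by norm_num))).tendsto.comp hlim
    simpa using ((hlim'.pow 2).div_const 2).sub (hrpow.const_mul (2 / 3 * c))
  have hEx : E x = 0 := tendsto_nhds_unique (tendsto_const_nhds.congr' <|
    (eventually_gt_atTop x).mono fun y hy => (hconst y hy).symm) hElim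
  simp only [hE_def] at hEx
  linarith

theorem hasDerivAt_rpow_one_div_four {f : ℝ → ℝ} {f' a x : ℝ} (ha : 0 ≤ a) (hfx : 0 < f x)
    (hf : HasDerivAt f f' x) (hf'_nonpos : f' ≤ 0) (hsq : f' ^ 2 = a ^ 2 * f x ^ (3 / 2 : ℝ)) :
    HasDerivAt (fun t => f t ^ (1 / 4 : ℝ)) (-(a / 4)) x := by
  have habs : |f'| = a * f x ^ (3 / 4 : ℝ) := by
    rw [← sqrt_sq_eq_abs, hsq, sqrt_mul (sq_nonneg a), sqrt_sq ha, sqrt_eq_rpow,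
      ← rpow_mul hfx.le]
    norm_num
  have hf' : f' = -(a * f x ^ (3 / 4 : ℝ)) := by rw [← habs, abs_of_nonpos hf'_nonpos, neg_neg]
  have hcancel : f x ^ (3 / 4 : ℝ) * f x ^ (1 / 4 - 1 : ℝ) = 1 := by
    rw [← rpow_add hfx]
    norm_num
  convert hf.rpow_const (p := 1 / 4) (Or.inl hfx.ne') using 1
  linear_combination (a / 4) * hcancel - (1 / 4 * f x ^ (1 / 4 - 1 : ℝ)) * hf'

theorem hasDerivAt_rpow_one_div_four_of_hasDerivAt_eq_mul_sqrt {f f' : ℝ → ℝ} {c x : ℝ}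
    (hc : 0 ≤ c) (hmono : AntitoneOn f (Ioi 0))
    (hf : ∀ x, 0 < x → HasDerivAt f (f' x) x)
    (hf' : ∀ x, 0 < x → HasDerivAt f' (c * √(f x)) x)
    (hlim : Tendsto f atTop (𝓝 0)) (hlim' : Tendsto f' atTop (𝓝 0))
    (hx : 0 < x) (hfx : 0 < f x) :
    HasDerivAt (fun t => f t ^ (1 / 4 : ℝ)) (-(√(4 / 3 * c) / 4)) x := by
  have hsign : f' x ≤ 0 := by
    rw [← (hf x hx).deriv, ← derivWithin_of_mem_nhds (Ioi_mem_nhds hx)]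
    exact hmono.derivWithin_nonpos
  refine hasDerivAt_rpow_one_div_four (sqrt_nonneg _) hfx (hf x hx) hsign ?_
  rw [sq_sqrt (by positivity)]
  exact sq_eq_mul_rpow_of_hasDerivAt_eq_mul_sqrt hf hf' hlim hlim' hx

theorem rpow_one_div_four_sub_eq_of_hasDerivAt {f : ℝ → ℝ} {k x y : ℝ}
    (hcont : ContinuousOn f (Ioi 0))
    (hderiv : ∀ x, 0 < x → 0 < f x → HasDerivAt (fun t => f t ^ (1 / 4 : ℝ)) (-k) x)
    (hx : 0 < x) (hxy : x < y) (hpos : ∀ t ∈ Ioo x y, 0 < f t) :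
    f y ^ (1 / 4 : ℝ) - f x ^ (1 / 4 : ℝ) = -k * (y - x) :=
  sub_eq_mul_sub_of_hasDerivAt_const hxy
    ((hcont.mono fun _ ht => hx.trans_le ht.1).rpow_const fun _ _ => Or.inr (by norm_num))
    fun t ht => hderiv t (hx.trans ht.1) (hpos t ht)

theorem exists_pos_eq_zero_of_hasDerivAt_rpow {f : ℝ → ℝ} {k : ℝ} (hk : 0 < k)
    (hf0 : ∀ x, 0 < x → 0 ≤ f x) (hcont : ContinuousOn f (Ioi 0))
    (hderiv : ∀ x, 0 < x → 0 < f x → HasDerivAt (fun t => f t ^ (1 / 4 : ℝ)) (-k) x) :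
    ∃ x, 0 < x ∧ f x = 0 := by
  by_contra! hne
  have hpos : ∀ t, 0 < t → 0 < f t := fun t ht => (hf0 t ht).lt_of_ne' (hne t ht)
  have hq1 : 0 ≤ f 1 ^ (1 / 4 : ℝ) := rpow_nonneg (hf0 1 one_pos) _
  set y := 1 + (f 1 ^ (1 / 4 : ℝ) + 1) / k with hy_def
  have hy : 1 < y := lt_add_of_pos_right 1 (div_pos (by linarith) hk)
  have hky : k * (y - 1) = f 1 ^ (1 / 4 : ℝ) + 1 := by
    rw [hy_def]
    field_simp
    ring
  have hdrop := rpow_one_div_four_sub_eq_of_hasDerivAt hcont hderiv one_pos hy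
    fun t ht => hpos t (one_pos.trans ht.1)
  have hqy : 0 ≤ f y ^ (1 / 4 : ℝ) := rpow_nonneg (hf0 y (one_pos.trans hy)) _
  linarith

theorem exists_eq_quartic_of_hasDerivAt_rpow {f : ℝ → ℝ} {k : ℝ} (hk : 0 < k)
    (hf0 : ∀ x, 0 < x → 0 ≤ f x) (hcont : ContinuousOn f (Ioi 0))
    (hmono : AntitoneOn f (Ioi 0))
    (hderiv : ∀ x, 0 < x → 0 < f x → HasDerivAt (fun t => f t ^ (1 / 4 : ℝ)) (-k) x) :
    ∃ b, 0 ≤ b ∧ (∀ x, 0 < x → x < b → f x = (k * (b - x)) ^ 4) ∧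
      ∀ x, 0 < x → b ≤ x → f x = 0 := by
  set S := {x | 0 < x ∧ f x = 0}
  have hS : S.Nonempty := exists_pos_eq_zero_of_hasDerivAt_rpow hk hf0 hcont hderiv
  have hSbdd : BddBelow S := ⟨0, fun _ h => h.1.le⟩
  set b := sInf S
  have hb0 : 0 ≤ b := le_csInf hS fun x hx => hx.1.le
  have hzero : ∀ x, b < x → f x = 0 := fun x hx => by
    obtain ⟨s, ⟨hs0, hs⟩, hsx⟩ := exists_lt_of_csInf_lt hS hx
    exact le_antisymm (hs ▸ hmono hs0 (hs0.trans hsx) hsx.le) (hf0 x (hs0.trans hsx))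
  have hpos : ∀ x, 0 < x → x < b → 0 < f x := fun x hx hxb =>
    (hf0 x hx).lt_of_ne' fun h => (csInf_le hSbdd ⟨hx, h⟩).not_gt hxb
  have hfb : 0 < b → f b = 0 := fun hb => by
    have hcb := (hcont.continuousAt (Ioi_mem_nhds hb)).continuousWithinAt (s := Ioi b)
    exact tendsto_nhds_unique hcb (tendsto_const_nhds.congr' <|
      eventually_nhdsWithin_of_forall fun x hx => (hzero x hx).symm)
  refine ⟨b, hb0, fun x hx hxb => ?_, fun x hx hbx => ?_⟩
  · have hdrop := rpow_one_div_four_sub_eq_of_hasDerivAt hcont hderiv hx hxb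
      fun t ht => hpos t (hx.trans ht.1) ht.2
    rw [hfb (hx.trans hxb), zero_rpow (by norm_num)] at hdrop
    have hroot : f x ^ (1 / 4 : ℝ) = k * (b - x) := by linarith
    rw [← hroot, ← rpow_natCast, ← rpow_mul (hf0 x hx)]
    norm_num
  · rcases hbx.lt_or_eq with h | rfl
    exacts [hzero x h, hfb hx]

theorem HasDerivWithinAt.eq_of_eventuallyEq_Ioi {f g : ℝ → ℝ} {a f' g' : ℝ}
    (hf : HasDerivWithinAt f f' (Ioi a) a) (hg : HasDerivAt g g' a) (hfg : f =ᶠ[𝓝[>] a] g) :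
    f' = g' := by
  have hfa : f a = g a := tendsto_nhds_unique hf.continuousWithinAt
    (hg.continuousAt.continuousWithinAt.tendsto.congr' hfg.symm)
  exact (uniqueDiffWithinAt_Ioi a).eq_deriv _ hf
    (hg.hasDerivWithinAt.congr_of_eventuallyEq hfg hfa)

theorem HasDerivWithinAt.eq_of_eq_quartic {f : ℝ → ℝ} {f' k b : ℝ}
    (hf : HasDerivWithinAt f f' (Ioi 0) 0) (hb0 : 0 ≤ b)
    (hquartic : ∀ x, 0 < x → x < b → f x = (k * (b - x)) ^ 4)
    (hzero : ∀ x, 0 < x → b ≤ x → f x = 0) :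
    f' = -(4 * k ^ 4 * b ^ 3) := by
  rcases hb0.eq_or_lt with rfl | hb
  · have hflat : f =ᶠ[𝓝[>] 0] fun _ => 0 :=
      eventually_nhdsWithin_of_forall fun x hx => hzero x hx (le_of_lt hx)
    simpa using hf.eq_of_eventuallyEq_Ioi (hasDerivAt_const 0 0) hflat
  · have hg : HasDerivAt (fun x => (k * (b - x)) ^ 4) (-(4 * k ^ 4 * b ^ 3)) 0 := by
      refine ((((hasDerivAt_id' 0).const_sub b).const_mul k).fun_pow 4).congr_deriv ?_
      ring
    refine hf.eq_of_eventuallyEq_Ioi hg ?_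
    filter_upwards [Ioo_mem_nhdsGT hb] with x hx using hquartic x hx.1 hx.2

theorem stmt4 (w : ℝ → ℝ)
    (hnn : ∀ x : ℝ, 0 ≤ w x)
    (hc2 : ContDiffOn ℝ 2 w (Set.Ioi 0))
    (hmono : AntitoneOn w (Set.Ioi 0))
    (hode : ∀ x : ℝ, 0 < x → deriv (deriv w) x = Real.sqrt ((2 / π) * w x))
    (hlim : Tendsto w atTop (nhds 0))
    (hlim' : Tendsto (deriv w) atTop (nhds 0))
    (hderiv0 : Tendsto (fun h : ℝ => (w h - w 0) / h) (nhdsWithin 0 (Set.Ioi 0)) (nhds (-1))) :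
    (∀ x : ℝ, 0 < x → x < (18 * π) ^ ((1 : ℝ) / 3) →
      w x = (1 / (72 * π)) * ((18 * π) ^ ((1 : ℝ) / 3) - x) ^ 4) ∧
    ∀ x : ℝ, (18 * π) ^ ((1 : ℝ) / 3) ≤ x → w x = 0 := by
  set k := √(4 / 3 * √(2 / π)) / 4
  have hk4 : k ^ 4 = 1 / (72 * π) := by
    rw [div_pow, show ∀ a : ℝ, a ^ 4 = (a ^ 2) ^ 2 by intro; ring, sq_sqrt (by positivity),
      mul_pow, sq_sqrt (by positivity)]
    field_simp
    ring
  have hw' : ∀ x, 0 < x → HasDerivAt w (deriv w x) x := fun x hx =>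
    ((hc2.differentiableOn two_ne_zero).differentiableAt (Ioi_mem_nhds hx)).hasDerivAt
  have hw'' : ∀ x, 0 < x → HasDerivAt (deriv w) (√(2 / π) * √(w x)) x := fun x hx => by
    rw [← sqrt_mul (by positivity), ← hode x hx]
    have hc1 := hc2.deriv_of_isOpen isOpen_Ioi (m := 1) (by norm_num)
    exact ((hc1.differentiableOn one_ne_zero).differentiableAt (Ioi_mem_nhds hx)).hasDerivAt
  obtain ⟨b, hb0, hquartic, hzero⟩ := exists_eq_quartic_of_hasDerivAt_rpow (k := k)
    (by positivity) (fun x _ => hnn x) hc2.continuousOn hmono fun x hx hwx =>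
      hasDerivAt_rpow_one_div_four_of_hasDerivAt_eq_mul_sqrt (by positivity) hmono hw' hw''
        hlim hlim' hx hwx
  have hw0 : HasDerivWithinAt w (-1) (Ioi 0) 0 :=
    (hasDerivWithinAt_iff_tendsto_slope' (lt_irrefl 0)).2 <|
      hderiv0.congr fun h => by rw [slope_def_field, sub_zero]
  have hb3 : b ^ 3 = 18 * π := by
    have := hw0.eq_of_eq_quartic hb0 hquartic hzero
    rw [hk4] at this
    field_simp at this
    linarith
  have hb : 0 < b :=
    lt_of_pow_lt_pow_left₀ 3 hb0 (by rw [zero_pow three_ne_zero, hb3]; positivity)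
  have hroot : (18 * π) ^ ((1 : ℝ) / 3) = b := by
    rw [← hb3, one_div]
    exact_mod_cast pow_rpow_inv_natCast hb0 three_ne_zero
  rw [hroot]
  exact ⟨fun x hx hxb => by rw [hquartic x hx hxb, mul_pow, hk4],
    fun x hbx => hzero x (hb.trans_le hbx) hbx⟩
end

section
/- Let (Z_i)_{i ∈ I} be independent uniform {−1,+1}-valued random variables indexed by a countable set I. Let i_1, i_2, … ∈ I be a sequence of pairwise distinct random indices and ξ_1, ξ_2, … a sequence of {−1,+1}-valued random variables such that for every k ≥ 1, both i_k and ξ_k are measurable with respect to the σ-algebra generated by Z_{i_1}, …, Z_{i_{k−1}}. Then the sequence (ξ_k · Z_{i_k})_{k ≥ 1} is i.i.d. with each term uniform on {−1,+1}. -/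
/-!
Write `F n` for the σ-algebra generated by the first `n` revealed coordinates. On the event that
`j` is not among them, every `F n`-measurable set coincides with a set measurable with respect to
`(Z i)_{i ≠ j}`; as the indices are distinct, `Z j` is therefore independent of `F n` on
`{i_{n+1} = j}`. Summing over `j`, the next revealed coordinate is a fair sign independent of
`F n`, and multiplying it by the `F n`-measurable sign `ξ_{n+1}` preserves this. A sequence each of
whose terms is independent of its past is independent.
-/

open MeasureTheory ProbabilityTheory
open scoped ENNReal

section General

variable {Ω I β : Type*}

theorem measurableSet_map_comap_subtype_val_iff {m : MeasurableSpace Ω} {D A : Set Ω}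
    (hD : MeasurableSet[m] D) :
    MeasurableSet[(m.comap ((↑) : D → Ω)).map (↑)] A ↔ MeasurableSet[m] (A ∩ D) := by
  rw [MeasurableSpace.map_def, Set.inter_comm, ← Subtype.image_preimage_coe]
  refine ⟨fun h => @MeasurableSet.subtype_image Ω m D _ hD h, fun h => ?_⟩
  exact ⟨_, h, Set.preimage_image_eq _ Subtype.val_injective⟩

theorem preimage_apply_index (f : Ω → I) (Z : I → Ω → β) (S : Set β) :
    (fun ω => Z (f ω) ω) ⁻¹' S = ⋃ i, f ⁻¹' {i} ∩ Z i ⁻¹' S := by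
  ext ω
  simp

theorem measurable_apply_index {m : MeasurableSpace Ω} [MeasurableSpace β] [Countable I]
    {f : Ω → I} {Z : I → Ω → β}
    (h : ∀ i S, MeasurableSet S → MeasurableSet[m] (f ⁻¹' {i} ∩ Z i ⁻¹' S)) :
    Measurable[m] (fun ω => Z (f ω) ω) := fun S hS => by
  rw [preimage_apply_index]
  exact MeasurableSet.iUnion fun i => h i S hS

theorem measure_eq_tsum_inter_preimage_singleton [MeasurableSpace Ω] [Countable I]
    (μ : Measure Ω) {f : Ω → I} (hf : ∀ i, MeasurableSet (f ⁻¹' {i})) (s : Set Ω) :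
    μ s = ∑' i, μ (s ∩ f ⁻¹' {i}) := by
  rw [← tsum_univ fun i => μ (s ∩ f ⁻¹' {i})]
  have := tsum_measure_preimage_singleton (μ := μ.restrict s) Set.countable_univ
    fun i _ => hf i
  simpa [Measure.restrict_apply (hf _), Set.inter_comm] using this.symm

theorem iIndepFun_of_indep_of_measurable_succ [MeasurableSpace Ω] [MeasurableSpace β]
    {μ : Measure Ω} [IsProbabilityMeasure μ] {F : ℕ → MeasurableSpace Ω} (hF : Monotone F)
    {Y : ℕ → Ω → β} (hY : ∀ k, Measurable[F (k + 1)] (Y k))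
    (hindep : ∀ n, Indep (F n) (MeasurableSpace.comap (Y n) inferInstance) μ) :
    iIndepFun Y μ := by
  rw [iIndepFun_iff_measure_inter_preimage_eq_mul]
  intro S sets hsets
  induction S using Finset.induction_on_max with
  | empty => simp
  | insert a S hlt ih =>
    have hpast : MeasurableSet[F a] (⋂ i ∈ S, Y i ⁻¹' sets i) :=
      Finset.measurableSet_biInter _ fun i hi =>
        hF (hlt i hi) _ (hY i (hsets i (Finset.mem_insert_of_mem hi)))
    rw [Finset.set_biInter_insert, Finset.prod_insert fun ha => (hlt a ha).false,
      Set.inter_comm, (Indep_iff _ _ μ).1 (hindep a) _ _ hpast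
        ⟨sets a, hsets a (Finset.mem_insert_self a S), rfl⟩,
      ih fun i hi => hsets i (Finset.mem_insert_of_mem hi), mul_comm]

end General

section FairSign

variable {Ω : Type*} {m₀ : MeasurableSpace Ω} {μ : Measure Ω}

noncomputable def rademacher : Measure ℝ :=
  (2⁻¹ : ℝ≥0∞) • (Measure.dirac 1 + Measure.dirac (-1))

theorem measure_preimage_eq_mul_rademacher {ν : Measure Ω} [IsFiniteMeasure ν] {W : Ω → ℝ}
    (hW : Measurable W) (hhalf : ∀ ε : ℝ, ε = 1 ∨ ε = -1 → ν (W ⁻¹' {ε}) = ν Set.univ / 2)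
    {T : Set ℝ} (hT : MeasurableSet T) : ν (W ⁻¹' T) = ν Set.univ * rademacher T := by
  have hdisj : ∀ s t : Set ℝ, Disjoint (W ⁻¹' (s ∩ {1})) (W ⁻¹' (t ∩ {-1})) := fun s t =>
    (Disjoint.mono Set.inter_subset_right Set.inter_subset_right
      (Set.disjoint_singleton.2 (by norm_num))).preimage W
  have hsign : ∀ s : Set ℝ, W ⁻¹' (s ∩ {1, -1}) = W ⁻¹' (s ∩ {1}) ∪ W ⁻¹' (s ∩ {-1}) := by
    intro s
    rw [← Set.preimage_union, ← Set.inter_union_distrib_left, Set.insert_eq]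
  have hpiece : ∀ b : ℝ, b = 1 ∨ b = -1 →
      ν (W ⁻¹' (T ∩ {b})) = ν Set.univ / 2 * Measure.dirac b T := by
    intro b hb
    by_cases hbT : b ∈ T
    · simp [Set.inter_singleton_of_mem hbT, hhalf b hb, hbT]
    · simp [Set.inter_singleton_eq_empty.2 hbT, hbT]
  have hnull : ν (W ⁻¹' {1, -1})ᶜ = 0 := by
    have hfull : ν (W ⁻¹' {1, -1}) = ν Set.univ := by
      rw [← Set.univ_inter ({1, -1} : Set ℝ), hsign,
        measure_union (hdisj _ _) (hW (MeasurableSet.univ.inter (measurableSet_singleton _))),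
        Set.univ_inter, Set.univ_inter, hhalf 1 (Or.inl rfl), hhalf (-1) (Or.inr rfl),
        ENNReal.add_halves]
    rw [measure_compl (hW ((measurableSet_singleton _).insert 1)) (measure_ne_top _ _), hfull, tsub_self]
  calc ν (W ⁻¹' T) = ν (W ⁻¹' (T ∩ {1, -1})) := by
        rw [Set.preimage_inter, measure_inter_conull hnull]
    _ = ν (W ⁻¹' (T ∩ {1})) + ν (W ⁻¹' (T ∩ {-1})) := by
        rw [hsign, measure_union (hdisj _ _) (hW (hT.inter (measurableSet_singleton _)))]
    _ = ν Set.univ * rademacher T := by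
        rw [hpiece 1 (Or.inl rfl), hpiece (-1) (Or.inr rfl)]
        simp only [rademacher, Measure.smul_apply, Measure.coe_add, Pi.add_apply, smul_eq_mul,
          div_eq_mul_inv]
        ring

/-- Taking `A = univ` shows that this forces `W ∈ {1, -1}` almost surely. -/
def IsFairSignIndep (m : MeasurableSpace Ω) (W : Ω → ℝ) (μ : Measure[m₀] Ω) : Prop :=
  ∀ A, MeasurableSet[m] A → ∀ ε : ℝ, ε = 1 ∨ ε = -1 → μ (A ∩ W ⁻¹' {ε}) = μ A / 2

namespace IsFairSignIndep

variable {m : MeasurableSpace Ω} {W : Ω → ℝ}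

theorem measure_preimage_singleton [IsProbabilityMeasure μ] (h : IsFairSignIndep m W μ)
    {ε : ℝ} (hε : ε = 1 ∨ ε = -1) : μ (W ⁻¹' {ε}) = 1 / 2 := by
  simpa using h Set.univ MeasurableSet.univ ε hε

theorem indep [IsProbabilityMeasure μ] (hW : Measurable[m₀] W)
    (h : IsFairSignIndep m W μ) : Indep m (MeasurableSpace.comap W inferInstance) μ := by
  have hrestrict : ∀ A, MeasurableSet[m] A → ∀ T, MeasurableSet T →
      μ (A ∩ W ⁻¹' T) = μ A * rademacher T := by
    intro A hA T hT
    have := measure_preimage_eq_mul_rademacher (ν := μ.restrict A) hW (fun ε hε => by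
      simpa [Measure.restrict_apply (hW (measurableSet_singleton ε)), Set.inter_comm]
        using h A hA ε hε) hT
    simpa [Measure.restrict_apply (hW hT), Set.inter_comm] using this
  rw [Indep_iff]
  rintro A _ hA ⟨T, hT, rfl⟩
  rw [hrestrict A hA T hT, ← Set.univ_inter (W ⁻¹' T), hrestrict _ MeasurableSet.univ T hT,
    measure_univ, one_mul]

theorem mul (hm : m ≤ m₀) (hW : Measurable[m₀] W) (h : IsFairSignIndep m W μ) {ξ : Ω → ℝ}
    (hξ : Measurable[m] ξ) (hξval : ∀ ω, ξ ω = 1 ∨ ξ ω = -1) :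
    IsFairSignIndep m (fun ω => ξ ω * W ω) μ := by
  intro A hA ε hε
  have hAs : ∀ s, MeasurableSet[m] (A ∩ ξ ⁻¹' {s}) := fun s =>
    hA.inter (hξ (measurableSet_singleton s))
  have hdisj : ∀ s t : Set Ω, Disjoint (A ∩ ξ ⁻¹' {1} ∩ s) (A ∩ ξ ⁻¹' {-1} ∩ t) := fun s t =>
    Disjoint.mono (by intro; simp +contextual) (by intro; simp +contextual)
      ((Set.disjoint_singleton.2 (by norm_num : (1 : ℝ) ≠ -1)).preimage ξ)
  have hsplit : A ∩ (fun ω => ξ ω * W ω) ⁻¹' {ε}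
      = A ∩ ξ ⁻¹' {1} ∩ W ⁻¹' {ε} ∪ A ∩ ξ ⁻¹' {-1} ∩ W ⁻¹' {-ε} := by
    ext ω
    rcases hξval ω with hω | hω <;> norm_num [hω, neg_eq_iff_eq_neg]
  have hA_split : A = A ∩ ξ ⁻¹' {1} ∩ Set.univ ∪ A ∩ ξ ⁻¹' {-1} ∩ Set.univ := by
    ext ω
    rcases hξval ω with hω | hω <;> norm_num [hω]
  have hnegε : -ε = 1 ∨ -ε = -1 := by rcases hε with rfl | rfl <;> norm_num
  calc μ (A ∩ (fun ω => ξ ω * W ω) ⁻¹' {ε})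
      = μ (A ∩ ξ ⁻¹' {1} ∩ W ⁻¹' {ε}) + μ (A ∩ ξ ⁻¹' {-1} ∩ W ⁻¹' {-ε}) := by
        rw [hsplit, measure_union (hdisj _ _)
          ((hm _ (hAs (-1))).inter (hW (measurableSet_singleton _)))]
    _ = μ (A ∩ ξ ⁻¹' {1}) / 2 + μ (A ∩ ξ ⁻¹' {-1}) / 2 := by
        rw [h _ (hAs 1) ε hε, h _ (hAs (-1)) (-ε) hnegε]
    _ = μ A / 2 := by
        conv_rhs => rw [hA_split, measure_union (hdisj _ _) ((hm _ (hAs (-1))).inter .univ)]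
        simp only [Set.inter_univ, ENNReal.div_add_div_same]

end IsFairSignIndep

end FairSign

section Revealed

variable {Ω I β : Type*} [MeasurableSpace β] {Z : I → Ω → β} {idx : ℕ → Ω → I}

variable (Z idx) in
/-- Indices start at `0`: `idx k` is the paper's `i_{k+1}`, and `revealed Z idx n` is generated by
`Z (idx 0), …, Z (idx (n - 1))`. -/
abbrev revealed (n : ℕ) : MeasurableSpace Ω :=
  ⨆ l ∈ Finset.range n, MeasurableSpace.comap (fun ω => Z (idx l ω) ω) inferInstance

theorem revealed_mono : Monotone (revealed Z idx) := fun _ _ hkn =>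
  biSup_mono fun _ hl => Finset.mem_range.2 ((Finset.mem_range.1 hl).trans_le hkn)

theorem measurable_revealed_succ (k : ℕ) :
    Measurable[revealed Z idx (k + 1)] (fun ω => Z (idx k ω) ω) :=
  Measurable.of_comap_le <| le_iSup₂ (f := fun l (_ : l ∈ Finset.range (k + 1)) =>
    MeasurableSpace.comap (fun ω => Z (idx l ω) ω) inferInstance) k (Finset.self_mem_range_succ k)

variable [Countable I]

theorem measurableSet_inter_unrevealed
    (hidx : ∀ k i, MeasurableSet[revealed Z idx k] (idx k ⁻¹' {i})) (j : I) (n : ℕ)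
    {A : Set Ω} (hA : MeasurableSet[revealed Z idx n] A) :
    MeasurableSet[⨆ i ∈ ({j}ᶜ : Set I), MeasurableSpace.comap (Z i) inferInstance]
      (A ∩ {ω | ∀ l < n, idx l ω ≠ j}) := by
  set G := ⨆ i ∈ ({j}ᶜ : Set I), MeasurableSpace.comap (Z i) inferInstance
  induction n generalizing A with
  | zero =>
    have hbot : revealed Z idx 0 = ⊥ := by simp [revealed]
    rw [hbot, MeasurableSpace.measurableSet_bot_iff] at hA
    rcases hA with rfl | rfl <;> simp
  | succ n ih =>
    set D := {ω | ∀ l < n + 1, idx l ω ≠ j}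
    have hFn : ∀ A, MeasurableSet[revealed Z idx n] A → MeasurableSet[G] (A ∩ D) := by
      intro A hA
      have hD_eq : A ∩ D = A ∩ (idx n ⁻¹' {j})ᶜ ∩ {ω | ∀ l < n, idx l ω ≠ j} := by
        ext ω
        simp only [D, Set.mem_inter_iff, Set.mem_ofPred_eq, Set.mem_compl_iff,
          Set.mem_preimage, Set.mem_singleton_iff, Nat.lt_succ_iff_lt_or_eq]
        grind
      rw [hD_eq]
      exact ih (hA.inter (hidx n j).compl)
    have hD : MeasurableSet[G] D := by simpa using hFn Set.univ MeasurableSet.univ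
    -- the sets whose trace on `D` is `G`-measurable form a σ-algebra
    have hT := fun A => measurableSet_map_comap_subtype_val_iff (A := A) hD
    suffices revealed Z idx (n + 1) ≤ (G.comap ((↑) : D → Ω)).map (↑) from (hT A).1 (this A hA)
    refine iSup₂_le fun l hl => Measurable.comap_le <| measurable_apply_index fun i S hS => ?_
    rw [hT, Set.inter_right_comm]
    by_cases hij : i = j
    · subst hij
      convert MeasurableSet.empty
      ext ω
      simp only [D, Set.mem_inter_iff, Set.mem_preimage, Set.mem_singleton_iff, Set.mem_ofPred_eq,
        Set.mem_empty_iff_false, iff_false, not_and]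
      exact fun h _ => h.2 l (Finset.mem_range.1 hl) h.1
    · have hl' : l ≤ n := Nat.lt_succ_iff.1 (Finset.mem_range.1 hl)
      exact (hFn _ (revealed_mono hl' _ (hidx l i))).inter <|
        le_iSup₂ (f := fun i (_ : i ∈ ({j}ᶜ : Set I)) =>
          MeasurableSpace.comap (Z i) inferInstance) i hij _ ⟨S, hS, rfl⟩

variable [MeasurableSpace Ω]

theorem revealed_le (hZ : ∀ i, Measurable (Z i))
    (hidx : ∀ k i, MeasurableSet[revealed Z idx k] (idx k ⁻¹' {i})) (n : ℕ) :
    revealed Z idx n ≤ ‹MeasurableSpace Ω› := by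
  induction n using Nat.strong_induction_on with
  | _ n ih =>
    refine iSup₂_le fun l hl => Measurable.comap_le <| measurable_apply_index fun i S hS =>
      (ih l (Finset.mem_range.1 hl) _ (hidx l i)).inter (hZ i hS)

theorem measure_inter_preimage_unrevealed {μ : Measure Ω} (hZ : ∀ i, Measurable (Z i))
    (hindep : iIndepFun Z μ) (hidx : ∀ k i, MeasurableSet[revealed Z idx k] (idx k ⁻¹' {i}))
    {n : ℕ} {j : I} {A : Set Ω} (hA : MeasurableSet[revealed Z idx n] A)
    (hA_unrevealed : ∀ ω ∈ A, ∀ l < n, idx l ω ≠ j) {S : Set β} (hS : MeasurableSet S) :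
    μ (A ∩ Z j ⁻¹' S) = μ A * μ (Z j ⁻¹' S) := by
  have hindep_j := indep_iSup_of_disjoint (fun i => (hZ i).comap_le) hindep.iIndep
    (disjoint_compl_left (a := ({j} : Set I)))
  have hA_eq : A ∩ {ω | ∀ l < n, idx l ω ≠ j} = A := Set.inter_eq_left.2 hA_unrevealed
  refine (Indep_iff _ _ μ).1 hindep_j _ _
    (hA_eq ▸ measurableSet_inter_unrevealed hidx j n hA) ?_
  exact le_iSup₂ (f := fun i (_ : i ∈ ({j} : Set I)) =>
    MeasurableSpace.comap (Z i) inferInstance) j rfl _ ⟨S, hS, rfl⟩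

end Revealed

theorem isFairSignIndep_revealed {Ω I : Type*} [MeasurableSpace Ω] [Countable I]
    {μ : Measure Ω} {Z : I → Ω → ℝ} {idx : ℕ → Ω → I} (hZ : ∀ i, Measurable (Z i))
    (hindep : iIndepFun Z μ)
    (hunif : ∀ i, μ (Z i ⁻¹' {1}) = 1 / 2 ∧ μ (Z i ⁻¹' {-1}) = 1 / 2)
    (hidx : ∀ k i, MeasurableSet[revealed Z idx k] (idx k ⁻¹' {i}))
    (hdistinct : ∀ ω (k l : ℕ), k ≠ l → idx k ω ≠ idx l ω) (n : ℕ) :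
    IsFairSignIndep (revealed Z idx n) (fun ω => Z (idx n ω) ω) μ := by
  intro A hA ε hε
  have hidx₀ : ∀ i, MeasurableSet (idx n ⁻¹' {i}) := fun i => revealed_le hZ hidx n _ (hidx n i)
  rw [measure_eq_tsum_inter_preimage_singleton μ hidx₀,
    measure_eq_tsum_inter_preimage_singleton μ hidx₀ A, div_eq_mul_inv, ← ENNReal.tsum_mul_right]
  refine tsum_congr fun j => ?_
  have hA_unrevealed : ∀ ω ∈ A ∩ idx n ⁻¹' {j}, ∀ l < n, idx l ω ≠ j :=
    fun ω hω l hl => hω.2 ▸ hdistinct ω l n hl.ne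
  have hZj : μ (Z j ⁻¹' {ε}) = 1 / 2 := by
    rcases hε with rfl | rfl
    exacts [(hunif j).1, (hunif j).2]
  have hset : A ∩ (fun ω => Z (idx n ω) ω) ⁻¹' {ε} ∩ idx n ⁻¹' {j}
      = A ∩ idx n ⁻¹' {j} ∩ Z j ⁻¹' {ε} := by
    ext ω
    simp only [Set.mem_inter_iff, Set.mem_preimage, Set.mem_singleton_iff]
    grind
  rw [hset, measure_inter_preimage_unrevealed hZ hindep hidx (hA.inter (hidx n j))
    hA_unrevealed (measurableSet_singleton ε), hZj, one_div]

theorem stmt5_general {Ω : Type*} [MeasurableSpace Ω] (μ : Measure Ω) [IsProbabilityMeasure μ]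
    {I : Type*} [Countable I]
    (Z : I → Ω → ℝ) (hZmeas : ∀ i, Measurable (Z i))
    (hZindep : iIndepFun Z μ)
    (hZunif : ∀ i, μ {ω | Z i ω = 1} = 1 / 2 ∧ μ {ω | Z i ω = -1} = 1 / 2)
    (idx : ℕ → Ω → I) (ξ : ℕ → Ω → ℝ)
    (hξval : ∀ k ω, ξ k ω = 1 ∨ ξ k ω = -1)
    (hdistinct : ∀ ω (k l : ℕ), k ≠ l → idx k ω ≠ idx l ω)
    (F : ℕ → MeasurableSpace Ω)
    (hF : ∀ k, F k = ⨆ l ∈ Finset.range k,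
      MeasurableSpace.comap (fun ω => Z (idx l ω) ω) inferInstance)
    (hidxmeas : ∀ k (j : I), MeasurableSet[F k] {ω | idx k ω = j})
    (hξmeas : ∀ k, Measurable[F k] (ξ k)) :
    iIndepFun (fun k ω => ξ k ω * Z (idx k ω) ω) μ ∧
    ∀ k : ℕ, μ {ω | ξ k ω * Z (idx k ω) ω = 1} = 1 / 2 ∧
      μ {ω | ξ k ω * Z (idx k ω) ω = -1} = 1 / 2 := by
  obtain rfl : F = revealed Z idx := funext hF
  have hle := revealed_le hZmeas hidxmeas
  have hW : ∀ k, Measurable (fun ω => Z (idx k ω) ω) := fun k =>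
    (measurable_revealed_succ k).mono (hle (k + 1)) le_rfl
  have hfair : ∀ k, IsFairSignIndep (revealed Z idx k) (fun ω => ξ k ω * Z (idx k ω) ω) μ :=
    fun k => (isFairSignIndep_revealed hZmeas hZindep hZunif hidxmeas hdistinct k).mul (hle k)
      (hW k) (hξmeas k) (hξval k)
  refine ⟨iIndepFun_of_indep_of_measurable_succ revealed_mono (fun k => ?_)
      fun k => (hfair k).indep ?_,
    fun k => ⟨(hfair k).measure_preimage_singleton (Or.inl rfl),
      (hfair k).measure_preimage_singleton (Or.inr rfl)⟩⟩
  · exact ((hξmeas k).mono (revealed_mono k.le_succ) le_rfl).mul (measurable_revealed_succ k)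
  · exact ((hξmeas k).mono (hle k) le_rfl).mul (hW k)

theorem stmt5 {Ω : Type*} [MeasurableSpace Ω] (μ : Measure Ω) [IsProbabilityMeasure μ]
    {I : Type*} [Countable I] [MeasurableSpace I] [MeasurableSingletonClass I]
    (Z : I → Ω → ℝ) (hZmeas : ∀ i, Measurable (Z i))
    (hZindep : iIndepFun Z μ)
    (hZunif : ∀ i, μ {ω | Z i ω = 1} = 1 / 2 ∧ μ {ω | Z i ω = -1} = 1 / 2)
    (idx : ℕ → Ω → I) (ξ : ℕ → Ω → ℝ)
    (hξval : ∀ k ω, ξ k ω = 1 ∨ ξ k ω = -1)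
    (hdistinct : ∀ ω (k l : ℕ), k ≠ l → idx k ω ≠ idx l ω)
    (F : ℕ → MeasurableSpace Ω)
    (hF : ∀ k, F k = ⨆ l ∈ Finset.range k,
      MeasurableSpace.comap (fun ω => Z (idx l ω) ω) inferInstance)
    (hidxmeas : ∀ k (j : I), MeasurableSet[F k] {ω | idx k ω = j})
    (hξmeas : ∀ k, Measurable[F k] (ξ k)) :
    iIndepFun (fun k ω => ξ k ω * Z (idx k ω) ω) μ ∧
    ∀ k : ℕ, μ {ω | ξ k ω * Z (idx k ω) ω = 1} = 1 / 2 ∧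
      μ {ω | ξ k ω * Z (idx k ω) ω = -1} = 1 / 2 :=
  stmt5_general μ Z hZmeas hZindep hZunif idx ξ hξval hdistinct F hF hidxmeas hξmeas
end
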